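/- Let (ξ_k)_{k≥1} be a sequence of real random variables on (Ω,F) that is i.i.d. under 𝔼 = sup_{P∈Θ} E_P with 𝔼[ξ_1²] < ∞, and let P ∈ Θ satisfy E_P[ξ_k] = μ̄ for all k, where μ̄ = 𝔼[ξ_1]. Then for every n ≥ 1, E_P[(ξ̄_n − μ̄)²] ≤ 𝔼[ξ_1²]/n; consequently, for every ε > 0 and α > 1, Σ_{n=1}^∞ P(|ξ̄_{[α^n]} − μ̄| > ε) ≤ (𝔼[ξ_1²]/ε²)·Σ_{n=1}^∞ 1/[α^n] < ∞. -/

import Mathlib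

open MeasureTheory Filter Topology

/-- The sublinear expectation `𝔼[X] = sup_{P ∈ Θ} E_P[X]` associated with a set `Θ`
of probability measures. -/
noncomputable def SLE {Ω : Type*} [MeasurableSpace Ω] (Θ : Set (Measure Ω)) (X : Ω → ℝ) : ℝ :=
  sSup ((fun P : Measure Ω => ∫ ω, X ω ∂P) '' Θ)

/-- A bounded Lipschitz test function. -/
def BddLip {E : Type*} [PseudoMetricSpace E] (φ : E → ℝ) : Prop :=
  (∃ C, ∀ x, |φ x| ≤ C) ∧ (∃ K, LipschitzWith K φ)

section Helpers

/-- clamp to `[-R, R]` -/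
noncomputable def clmp (R x : ℝ) : ℝ := max (min x R) (-R)

lemma clmp_cases {R : ℝ} (hR : 0 ≤ R) (x : ℝ) :
    clmp R x = x ∨ (clmp R x = R ∧ R ≤ x) ∨ (clmp R x = -R ∧ x ≤ -R) := by
  unfold clmp
  rcases le_total x (-R) with h1 | h1
  · exact Or.inr (Or.inr ⟨by rw [min_eq_left (by linarith), max_eq_right h1], h1⟩)
  · rcases le_total x R with h2 | h2
    · exact Or.inl (by rw [min_eq_left h2, max_eq_left h1])
    · exact Or.inr (Or.inl ⟨by rw [min_eq_right h2, max_eq_left (by linarith)], h2⟩)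

lemma clmp_abs_le {R : ℝ} (hR : 0 ≤ R) (x : ℝ) : |clmp R x| ≤ R := by
  rw [abs_le]; unfold clmp
  exact ⟨le_max_right _ _, max_le (min_le_right _ _) (by linarith)⟩

lemma clmp_abs_le' {R : ℝ} (hR : 0 ≤ R) (x : ℝ) : |clmp R x| ≤ |x| := by
  rcases clmp_cases hR x with h | ⟨h, h2⟩ | ⟨h, h2⟩ <;> rw [h]
  · rw [abs_of_nonneg hR]; exact le_trans h2 (le_abs_self x)
  · rw [abs_neg, abs_of_nonneg hR]
    exact le_trans (by linarith) (neg_le_abs x)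

lemma lipschitzWith_clmp (R : ℝ) : LipschitzWith 1 (clmp R) :=
  (LipschitzWith.id.min_const R).max_const (-R)

lemma clmp_eq_of_abs_le {R x : ℝ} (h : |x| ≤ R) : clmp R x = x := by
  rw [abs_le] at h; unfold clmp
  rw [min_eq_left h.2, max_eq_left h.1]

lemma clmp_sub_abs {R : ℝ} (hR : 0 < R) (x : ℝ) : |clmp R x - x| ≤ x ^ 2 / R := by
  rw [le_div_iff₀ hR]
  rcases clmp_cases hR.le x with h | ⟨h, h2⟩ | ⟨h, h2⟩ <;> rw [h]
  · simp; positivity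
  · rw [abs_of_nonpos (by linarith)]; nlinarith
  · rw [abs_of_nonneg (by linarith)]; nlinarith

lemma clmp_sq_le {R : ℝ} (hR : 0 ≤ R) (x : ℝ) : (clmp R x) ^ 2 ≤ x ^ 2 := by
  have := clmp_abs_le' hR x
  nlinarith [abs_nonneg (clmp R x), sq_abs (clmp R x), sq_abs x]

lemma tendsto_clmp (x : ℝ) : Filter.Tendsto (fun N : ℕ => clmp N x) Filter.atTop (nhds x) := by
  apply Filter.Tendsto.congr' _ tendsto_const_nhds
  filter_upwards [Filter.eventually_atTop.mpr ⟨⌈|x|⌉₊, fun N hN => hN⟩] with N hN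
  exact (clmp_eq_of_abs_le (le_trans (Nat.le_ceil _) (by exact_mod_cast hN))).symm

lemma bddLip_clmp {R : ℝ} (hR : 0 ≤ R) : BddLip (clmp R) :=
  ⟨⟨R, clmp_abs_le hR⟩, ⟨1, lipschitzWith_clmp R⟩⟩

lemma bddLip_clmp_sq {R : ℝ} (hR : 0 ≤ R) : BddLip (fun x => (clmp R x) ^ 2) := by
  refine ⟨⟨R ^ 2, fun x => ?_⟩, ⟨2 * R.toNNReal, ?_⟩⟩
  · simp only []
    rw [abs_of_nonneg (sq_nonneg _)]
    nlinarith [abs_le.mp (clmp_abs_le hR x), abs_nonneg (clmp R x), sq_abs (clmp R x)]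
  · apply LipschitzWith.of_dist_le_mul
    intro x y
    have hx := clmp_abs_le hR x
    have hy := clmp_abs_le hR y
    have hl := (lipschitzWith_clmp R).dist_le_mul x y
    rw [Real.dist_eq, Real.dist_eq] at *
    have : |clmp R x ^ 2 - clmp R y ^ 2| = |clmp R x + clmp R y| * |clmp R x - clmp R y| := by
      rw [← abs_mul]; ring_nf
    rw [this]
    push_cast
    rw [Real.coe_toNNReal _ hR]
    calc |clmp R x + clmp R y| * |clmp R x - clmp R y| ≤ (2 * R) * |clmp R x - clmp R y| := by
          apply mul_le_mul_of_nonneg_right _ (abs_nonneg _)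
          calc |clmp R x + clmp R y| ≤ |clmp R x| + |clmp R y| := abs_add_le _ _
            _ ≤ 2 * R := by linarith
      _ ≤ (2 * R) * |x - y| := by
          apply mul_le_mul_of_nonneg_left _ (by linarith)
          simpa using hl

end Helpers


section SLEHelp
variable {Ω : Type*} [MeasurableSpace Ω] {Θ : Set (Measure Ω)}

lemma le_SLE {X : Ω → ℝ} {b : ℝ} (hb : ∀ Q ∈ Θ, ∫ ω, X ω ∂Q ≤ b) {P : Measure Ω}
    (hP : P ∈ Θ) : ∫ ω, X ω ∂P ≤ SLE Θ X := by
  have hbdd : BddAbove (Set.range fun Q : Measure Ω => ⨆ _ : Q ∈ Θ, ∫ ω, X ω ∂Q) := by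
    refine ⟨max b 0, ?_⟩
    rintro y ⟨Q, rfl⟩
    simp only []
    by_cases hQ : Q ∈ Θ
    · rw [ciSup_pos hQ]; exact le_max_of_le_left (hb Q hQ)
    · haveI : IsEmpty (Q ∈ Θ) := ⟨hQ⟩
      rw [Real.iSup_of_isEmpty]; exact le_max_right _ _
  calc ∫ ω, X ω ∂P = ⨆ _ : P ∈ Θ, ∫ ω, X ω ∂P :=
        (ciSup_pos (f := fun _ : P ∈ Θ => ∫ ω, X ω ∂P) hP).symm
    _ = ∫ ω, X ω ∂P := ciSup_pos (f := fun _ : P ∈ Θ => ∫ ω, X ω ∂P) hP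
    _ ≤ SLE Θ X := le_csSup ⟨b, by rintro _ ⟨Q, hQ, rfl⟩; exact hb Q hQ⟩ ⟨P, hP, rfl⟩

lemma SLE_le {X : Ω → ℝ} {b : ℝ} (hb0 : 0 ≤ b) (hb : ∀ Q ∈ Θ, ∫ ω, X ω ∂Q ≤ b) :
    SLE Θ X ≤ b := by
  exact Real.sSup_le (by rintro _ ⟨Q, hQ, rfl⟩; exact hb Q hQ) hb0

lemma SLE_le_of_nonempty {X : Ω → ℝ} {b : ℝ} (hne : Θ.Nonempty) (hb : ∀ Q ∈ Θ, ∫ ω, X ω ∂Q ≤ b) :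
    SLE Θ X ≤ b :=
  csSup_le (hne.image _) (by rintro _ ⟨Q, hQ, rfl⟩; exact hb Q hQ)

lemma SLE_nonneg {X : Ω → ℝ} (hX : ∀ Q ∈ Θ, 0 ≤ ∫ ω, X ω ∂Q) : 0 ≤ SLE Θ X :=
  Real.sSup_nonneg (by rintro _ ⟨Q, hQ, rfl⟩; exact hX Q hQ)

open scoped Pointwise in
lemma SLE_const_mul {c : ℝ} (hc : 0 ≤ c) (X : Ω → ℝ) :
    SLE Θ (fun ω => c * X ω) = c * SLE Θ X := by
  have e : (fun P : Measure Ω => ∫ ω, c * X ω ∂P) '' Θ =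
      c • ((fun P : Measure Ω => ∫ ω, X ω ∂P) '' Θ) := by
    rw [← Set.image_smul, Set.image_image]
    simp only [smul_eq_mul, integral_const_mul]
  rw [SLE, SLE, e, Real.sSup_smul_of_nonneg hc, smul_eq_mul]

lemma int_le_of_abs_le {Q : Measure Ω} [IsProbabilityMeasure Q] {f : Ω → ℝ} {C : ℝ}
    (hm : AEStronglyMeasurable f Q) (h : ∀ ω, |f ω| ≤ C) : ∫ ω, f ω ∂Q ≤ C := by
  have hint : Integrable f Q := Integrable.mono' (integrable_const C) hm
    (Filter.Eventually.of_forall fun ω => by simpa [Real.norm_eq_abs] using h ω)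
  calc ∫ ω, f ω ∂Q ≤ ∫ _, C ∂Q := integral_mono hint (integrable_const C)
        (fun ω => le_of_abs_le (h ω))
    _ = C := by simp

lemma integrable_of_abs_le {Q : Measure Ω} [IsProbabilityMeasure Q] {f : Ω → ℝ} {C : ℝ}
    (hm : AEStronglyMeasurable f Q) (h : ∀ ω, |f ω| ≤ C) : Integrable f Q :=
  Integrable.mono' (integrable_const C) hm
    (Filter.Eventually.of_forall fun ω => by simpa [Real.norm_eq_abs] using h ω)

lemma abs_int_le {Q : Measure Ω} [IsProbabilityMeasure Q] {f : Ω → ℝ} {C : ℝ}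
    (hm : AEStronglyMeasurable f Q) (h : ∀ ω, |f ω| ≤ C) : |∫ ω, f ω ∂Q| ≤ C := by
  have hint := integrable_of_abs_le hm h
  calc |∫ ω, f ω ∂Q| ≤ ∫ ω, |f ω| ∂Q := by
        simpa [Real.norm_eq_abs] using norm_integral_le_integral_norm (μ := Q) f
    _ ≤ C := int_le_of_abs_le hint.abs.aestronglyMeasurable (fun ω => by simp [abs_abs, h ω])

lemma int_clmp_diff {Q : Measure Ω} [IsProbabilityMeasure Q] {f : Ω → ℝ}
    (hf : MemLp f 2 Q) {R : ℝ} (hR : 0 < R) {c : ℝ} (hc : ∫ ω, f ω ^ 2 ∂Q ≤ c) :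
    |∫ ω, clmp R (f ω) ∂Q - ∫ ω, f ω ∂Q| ≤ c / R := by
  have hint : Integrable f Q := hf.integrable one_le_two
  have hmc : AEStronglyMeasurable (fun ω => clmp R (f ω)) Q :=
    (lipschitzWith_clmp R).continuous.comp_aestronglyMeasurable hf.aestronglyMeasurable
  have hintc : Integrable (fun ω => clmp R (f ω)) Q :=
    integrable_of_abs_le hmc (fun ω => clmp_abs_le hR.le (f ω))
  rw [← integral_sub hintc hint]
  calc |∫ ω, (clmp R (f ω) - f ω) ∂Q| ≤ ∫ ω, |clmp R (f ω) - f ω| ∂Q := by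
        simpa [Real.norm_eq_abs] using
          norm_integral_le_integral_norm (μ := Q) (fun ω => clmp R (f ω) - f ω)
    _ ≤ ∫ ω, f ω ^ 2 / R ∂Q := integral_mono (hintc.sub hint).abs
        (hf.integrable_sq.div_const R) (fun ω => clmp_sub_abs hR (f ω))
    _ = (∫ ω, f ω ^ 2 ∂Q) / R := integral_div R _
    _ ≤ c / R := by gcongr

end SLEHelp

section BddLipHelp

lemma bddLip_clmp_sub {R c : ℝ} (hR : 0 ≤ R) : BddLip (fun x : ℝ => clmp R (x - c)) :=
  ⟨⟨R, fun x => clmp_abs_le hR _⟩, ⟨1, by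
    apply LipschitzWith.of_dist_le_mul; intro x y
    have := (lipschitzWith_clmp R).dist_le_mul (x - c) (y - c)
    simpa [Real.dist_eq, sub_sub_sub_cancel_right] using this⟩⟩

lemma bddLip_clmp_eval {n : ℕ} {R c : ℝ} (hR : 0 ≤ R) (i : Fin n) :
    BddLip (fun y : Fin n → ℝ => clmp R (y i - c)) :=
  ⟨⟨R, fun y => clmp_abs_le hR _⟩, ⟨1, by
    apply LipschitzWith.of_dist_le_mul; intro y y'
    calc dist (clmp R (y i - c)) (clmp R (y' i - c)) ≤ 1 * dist (y i - c) (y' i - c) :=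
          (lipschitzWith_clmp R).dist_le_mul _ _
      _ = dist (y i) (y' i) := by
          rw [one_mul, Real.dist_eq, Real.dist_eq, sub_sub_sub_cancel_right]
      _ ≤ 1 * dist y y' := by
          rw [one_mul]; exact dist_le_pi_dist y y' i⟩⟩

lemma bddLip_mul {E F : Type*} [PseudoMetricSpace E] [PseudoMetricSpace F]
    [Nonempty E] [Nonempty F] {g : E → ℝ} {h : F → ℝ}
    (hg : BddLip g) (hh : BddLip h) : BddLip (fun p : E × F => g p.1 * h p.2) := by
  obtain ⟨⟨Cg, hCg⟩, ⟨Kg, hKg⟩⟩ := hg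
  obtain ⟨⟨Ch, hCh⟩, ⟨Kh, hKh⟩⟩ := hh
  have hCg0 : 0 ≤ Cg := le_trans (abs_nonneg _) (hCg (Classical.arbitrary E))
  have hCh0 : 0 ≤ Ch := le_trans (abs_nonneg _) (hCh (Classical.arbitrary F))
  refine ⟨⟨Cg * Ch, fun p => by
    rw [abs_mul]; exact mul_le_mul (hCg _) (hCh _) (abs_nonneg _) hCg0⟩,
    ⟨Cg.toNNReal * Kh + Ch.toNNReal * Kg, ?_⟩⟩
  apply LipschitzWith.of_dist_le_mul
  rintro ⟨y, x⟩ ⟨y', x'⟩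
  have key : g y * h x - g y' * h x' = g y * (h x - h x') + h x' * (g y - g y') := by ring
  have h1 : dist (g y * h x) (g y' * h x') ≤
      |g y| * dist (h x) (h x') + |h x'| * dist (g y) (g y') := by
    rw [Real.dist_eq, Real.dist_eq, Real.dist_eq, key]
    calc |g y * (h x - h x') + h x' * (g y - g y')|
        ≤ |g y * (h x - h x')| + |h x' * (g y - g y')| := abs_add_le _ _
      _ = |g y| * |h x - h x'| + |h x'| * |g y - g y'| := by rw [abs_mul, abs_mul]
  have hdy : dist y y' ≤ dist (y, x) (y', x') := by rw [Prod.dist_eq]; exact le_max_left _ _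
  have hdx : dist x x' ≤ dist (y, x) (y', x') := by rw [Prod.dist_eq]; exact le_max_right _ _
  have h2 : |g y| * dist (h x) (h x') ≤ Cg * (Kh * dist (y, x) (y', x')) := by
    apply mul_le_mul (hCg y) (le_trans (hKh.dist_le_mul x x') ?_) dist_nonneg hCg0
    exact mul_le_mul_of_nonneg_left hdx Kh.coe_nonneg
  have h3 : |h x'| * dist (g y) (g y') ≤ Ch * (Kg * dist (y, x) (y', x')) := by
    apply mul_le_mul (hCh x') (le_trans (hKg.dist_le_mul y y') ?_) dist_nonneg hCh0
    exact mul_le_mul_of_nonneg_left hdy Kg.coe_nonneg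
  calc dist (g y * h x) (g y' * h x') ≤
      Cg * (Kh * dist (y, x) (y', x')) + Ch * (Kg * dist (y, x) (y', x')) := by linarith
    _ = (Cg * Kh + Ch * Kg) * dist (y, x) (y', x') := by ring
    _ ≤ ((Cg.toNNReal * Kh + Ch.toNNReal * Kg : NNReal) : ℝ) * dist (y, x) (y', x') := by
        apply mul_le_mul_of_nonneg_right _ dist_nonneg
        push_cast
        rw [Real.coe_toNNReal _ hCg0, Real.coe_toNNReal _ hCh0]

lemma bddLip_const_add {E : Type*} [PseudoMetricSpace E] {g : E → ℝ} [Nonempty E]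
    (hg : BddLip g) (c : ℝ) : BddLip (fun y => c + g y) := by
  obtain ⟨⟨C, hC⟩, ⟨K, hK⟩⟩ := hg
  refine ⟨⟨|c| + C, fun y => le_trans (abs_add_le _ _) (by linarith [hC y])⟩, ⟨K, ?_⟩⟩
  apply LipschitzWith.of_dist_le_mul; intro x y
  have := hK.dist_le_mul x y
  simpa [Real.dist_eq, add_sub_add_left_eq_sub] using this

lemma bddLip_const_sub {E : Type*} [PseudoMetricSpace E] {g : E → ℝ} [Nonempty E]
    (hg : BddLip g) (c : ℝ) : BddLip (fun y => c - g y) := by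
  obtain ⟨⟨C, hC⟩, ⟨K, hK⟩⟩ := hg
  refine ⟨⟨|c| + C, fun y => le_trans (abs_sub _ _) (by linarith [hC y])⟩, ⟨K, ?_⟩⟩
  apply LipschitzWith.of_dist_le_mul; intro x y
  have := hK.dist_le_mul x y
  have h2 : dist (c - g x) (c - g y) = dist (g x) (g y) := by
    rw [Real.dist_eq, Real.dist_eq, sub_sub_sub_cancel_left, abs_sub_comm]
  rw [h2]; exact this

end BddLipHelp

/-- `X` is independent of the random vector `Y` under the sublinear expectation
associated with `Θ`: `𝔼[φ(Y, X)] = 𝔼[ 𝔼[φ(y, X)]|_{y = Y} ]` for all bounded Lipschitz `φ`. -/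
def IndepVec {Ω : Type*} [MeasurableSpace Ω] (Θ : Set (Measure Ω)) {n : ℕ}
    (X : Ω → ℝ) (Y : Ω → Fin n → ℝ) : Prop :=
  ∀ φ : (Fin n → ℝ) × ℝ → ℝ, BddLip φ →
    SLE Θ (fun ω => φ (Y ω, X ω)) = SLE Θ (fun ω => SLE Θ (fun ω' => φ (Y ω, X ω')))

/-- `(ξ_k)` is i.i.d. under the sublinear expectation associated with `Θ`:
each `ξ_{k+1}` is identically distributed with `ξ_1` and independent of `(ξ_1, …, ξ_k)`. -/
def IsIID {Ω : Type*} [MeasurableSpace Ω] (Θ : Set (Measure Ω)) (ξ : ℕ → Ω → ℝ) : Prop :=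
  (∀ k, ∀ φ : ℝ → ℝ, BddLip φ → SLE Θ (fun ω => φ (ξ k ω)) = SLE Θ (fun ω => φ (ξ 0 ω))) ∧
  (∀ k : ℕ, IndepVec Θ (ξ (k + 1)) (fun ω (i : Fin (k + 1)) => ξ i ω))

set_option maxHeartbeats 1000000 in
/-- if `(ξ_k)` is i.i.d. under `𝔼 = sup_{P∈Θ} E_P` with `𝔼[ξ_1²] < ∞`
and `P ∈ Θ` satisfies `E_P[ξ_k] = μ̄ = 𝔼[ξ_1]` for all `k`, then
`E_P[(ξ̄_n − μ̄)²] ≤ 𝔼[ξ_1²]/n` for all `n ≥ 1`; consequently, for every `ε > 0` and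
`α > 1`, `Σ_n P(|ξ̄_{[αⁿ]} − μ̄| > ε)` is finite and bounded by
`(𝔼[ξ_1²]/ε²)·Σ_n 1/[αⁿ]`. -/
theorem stmt9 {Ω : Type*} [MeasurableSpace Ω] (Θ : Set (Measure Ω)) (hne : Θ.Nonempty)
    (hprob : ∀ P ∈ Θ, IsProbabilityMeasure P)
    (ξ : ℕ → Ω → ℝ) (hmeas : ∀ k, Measurable (ξ k))
    (hiid : IsIID Θ ξ)
    (hL2 : ∀ Q ∈ Θ, ∀ k, MemLp (ξ k) 2 Q)
    (hmom : ∃ M : ℝ, ∀ Q ∈ Θ, ∀ k, ∫ ω, ξ k ω ^ 2 ∂Q ≤ M)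
    (P : Measure Ω) (hP : P ∈ Θ)
    (hEP : ∀ k : ℕ, ∫ ω, ξ k ω ∂P = SLE Θ (fun ω => ξ 0 ω)) :
    (∀ n : ℕ, 1 ≤ n →
      ∫ ω, ((∑ i ∈ Finset.range n, ξ i ω) / n - SLE Θ (fun ω' => ξ 0 ω')) ^ 2 ∂P ≤
        SLE Θ (fun ω => ξ 0 ω ^ 2) / n) ∧
    (∀ ε : ℝ, 0 < ε → ∀ α : ℝ, 1 < α →
      Summable (fun n : ℕ =>
        (P {ω | ε < |(∑ i ∈ Finset.range (Nat.floor (α ^ (n + 1))), ξ i ω) /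
            (Nat.floor (α ^ (n + 1)) : ℝ) - SLE Θ (fun ω' => ξ 0 ω')|}).toReal) ∧
      ∑' n : ℕ, (P {ω | ε < |(∑ i ∈ Finset.range (Nat.floor (α ^ (n + 1))), ξ i ω) /
            (Nat.floor (α ^ (n + 1)) : ℝ) - SLE Θ (fun ω' => ξ 0 ω')|}).toReal ≤
        SLE Θ (fun ω => ξ 0 ω ^ 2) / ε ^ 2 *
          ∑' n : ℕ, (1 : ℝ) / (Nat.floor (α ^ (n + 1)) : ℝ)) := by
  classical
  obtain ⟨M, hM⟩ := hmom
  haveI hPP : IsProbabilityMeasure P := hprob P hP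
  have h0Θ : (0 : Measure Ω) ∉ Θ := by
    intro h0
    have h1 := (hprob 0 h0).measure_univ
    simp at h1
  set μb := SLE Θ (fun ω => ξ 0 ω) with hμbdef
  set B := SLE Θ (fun ω => ξ 0 ω ^ 2) with hBdef
  have hB0 : 0 ≤ B := SLE_nonneg (fun Q _ => integral_nonneg fun ω => sq_nonneg _)
  have hM0 : 0 ≤ M := le_trans (integral_nonneg fun ω => sq_nonneg _) (hM P hP 0)
  set c₂ : ℝ := 2 * M + 2 * μb ^ 2 with hc₂def
  have hc₂0 : 0 ≤ c₂ := by positivity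
  -- integrability facts
  have hint1 : ∀ Q ∈ Θ, ∀ k, Integrable (ξ k) Q := fun Q hQ k => by
    haveI := hprob Q hQ; exact (hL2 Q hQ k).integrable one_le_two
  have hint2 : ∀ Q ∈ Θ, ∀ k, Integrable (fun ω => ξ k ω ^ 2) Q := fun Q hQ k =>
    (hL2 Q hQ k).integrable_sq
  have hL2' : ∀ Q ∈ Θ, ∀ k, MemLp (fun ω => ξ k ω - μb) 2 Q := by
    intro Q hQ k
    haveI := hprob Q hQ
    have := (hL2 Q hQ k).sub (memLp_const (E := ℝ) μb)
    simpa [Pi.sub_def] using this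
  have hint2' : ∀ Q ∈ Θ, ∀ k, Integrable (fun ω => (ξ k ω - μb) ^ 2) Q := fun Q hQ k =>
    (hL2' Q hQ k).integrable_sq
  have hintmul : ∀ Q ∈ Θ, ∀ i j, Integrable (fun ω => (ξ i ω - μb) * (ξ j ω - μb)) Q := by
    intro Q hQ i j
    haveI := hprob Q hQ
    apply Integrable.mono' (((hint2' Q hQ i).add (hint2' Q hQ j)).div_const 2)
    · exact (((hmeas i).sub measurable_const).mul ((hmeas j).sub measurable_const)).aestronglyMeasurable
    · refine Filter.Eventually.of_forall fun ω => ?_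
      rw [Real.norm_eq_abs, abs_mul]
      simp only [Pi.add_apply]
      nlinarith [sq_nonneg (|ξ i ω - μb| - |ξ j ω - μb|), sq_abs (ξ i ω - μb),
        sq_abs (ξ j ω - μb), abs_nonneg (ξ i ω - μb), abs_nonneg (ξ j ω - μb)]
  have hsqbd : ∀ Q ∈ Θ, ∀ k, ∫ ω, (ξ k ω - μb) ^ 2 ∂Q ≤ c₂ := by
    intro Q hQ k
    haveI := hprob Q hQ
    calc ∫ ω, (ξ k ω - μb) ^ 2 ∂Q ≤ ∫ ω, (2 * ξ k ω ^ 2 + 2 * μb ^ 2) ∂Q := by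
          apply integral_mono (hint2' Q hQ k) (((hint2 Q hQ k).const_mul 2).add (integrable_const _))
          intro ω; simp only [Pi.add_apply]; nlinarith [sq_nonneg (ξ k ω + μb)]
      _ = 2 * (∫ ω, ξ k ω ^ 2 ∂Q) + 2 * μb ^ 2 := by
          rw [integral_add ((hint2 Q hQ k).const_mul 2) (integrable_const _),
            integral_const_mul, integral_const]
          simp
      _ ≤ c₂ := by rw [hc₂def]; linarith [hM Q hQ k]
  have hbd1 : ∀ Q ∈ Θ, ∀ k, ∫ ω, ξ k ω ∂Q ≤ 1 + M := by
    intro Q hQ k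
    haveI := hprob Q hQ
    calc ∫ ω, ξ k ω ∂Q ≤ ∫ ω, (1 + ξ k ω ^ 2) ∂Q := by
          apply integral_mono (hint1 Q hQ k) ((integrable_const 1).add (hint2 Q hQ k))
          intro ω; simp only [Pi.add_apply]; nlinarith [sq_nonneg (ξ k ω - 1)]
      _ = 1 + ∫ ω, ξ k ω ^ 2 ∂Q := by
          rw [integral_add (integrable_const 1) (hint2 Q hQ k), integral_const]; simp
      _ ≤ 1 + M := by linarith [hM Q hQ k]
  have hmclmp : ∀ (R : ℝ) (k : ℕ), Measurable (fun ω => clmp R (ξ k ω)) := fun R k =>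
    ((lipschitzWith_clmp R).continuous.measurable).comp (hmeas k)
  have hmclmp' : ∀ (R : ℝ) (k : ℕ), Measurable (fun ω => clmp R (ξ k ω - μb)) := fun R k =>
    ((lipschitzWith_clmp R).continuous.measurable).comp ((hmeas k).sub measurable_const)
  -- Step A : all means are below the upper mean
  have hA : ∀ Q ∈ Θ, ∀ j, ∫ ω, ξ j ω ∂Q ≤ μb := by
    intro Q hQ j
    haveI := hprob Q hQ
    have key : ∀ N : ℕ, 1 ≤ N → ∫ ω, ξ j ω ∂Q ≤ μb + (M + M) / N := by
      intro N hN
      have hRpos : (0 : ℝ) < N := by exact_mod_cast hN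
      have h1 := (abs_le.mp (int_clmp_diff (hL2 Q hQ j) hRpos (hM Q hQ j))).1
      have h2 : ∫ ω, clmp N (ξ j ω) ∂Q ≤ SLE Θ (fun ω => clmp N (ξ j ω)) := by
        refine le_SLE (b := (N : ℝ)) (fun Q' hQ' => ?_) hQ
        haveI := hprob Q' hQ'
        exact int_le_of_abs_le (hmclmp N j).aestronglyMeasurable
          (fun ω => clmp_abs_le hRpos.le _)
      have h3 : SLE Θ (fun ω => clmp N (ξ j ω)) = SLE Θ (fun ω => clmp N (ξ 0 ω)) :=
        hiid.1 j _ (bddLip_clmp hRpos.le)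
      have h4 : SLE Θ (fun ω => clmp N (ξ 0 ω)) ≤ μb + M / N := by
        apply SLE_le_of_nonempty hne
        intro Q' hQ'
        haveI := hprob Q' hQ'
        have hd := (abs_le.mp (int_clmp_diff (hL2 Q' hQ' 0) hRpos (hM Q' hQ' 0))).2
        have h5 : ∫ ω, ξ 0 ω ∂Q' ≤ μb := le_SLE (fun Q'' hQ'' => hbd1 Q'' hQ'' 0) hQ'
        linarith
      have hdiv : (M + M) / (N : ℝ) = M / N + M / N := by ring
      rw [hdiv]
      linarith [h3 ▸ h2]
    have hlim : Filter.Tendsto (fun N : ℕ => μb + (M + M) / N) Filter.atTop (nhds μb) := by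
      have := tendsto_const_nhds (x := μb) (f := Filter.atTop (α := ℕ))
      simpa using this.add (tendsto_const_div_atTop_nhds_zero_nat (M + M))
    exact ge_of_tendsto hlim (Filter.eventually_atTop.mpr ⟨1, key⟩)
  -- Step B : the truncated centered upper means are small
  have haN : ∀ (j : ℕ) (N : ℕ), 1 ≤ N →
      |SLE Θ (fun ω => clmp N (ξ j ω - μb))| ≤ c₂ / N := by
    intro j N hN
    have hRpos : (0 : ℝ) < N := by exact_mod_cast hN
    rw [abs_le]
    constructor
    · have h1 : ∫ ω, clmp N (ξ j ω - μb) ∂P ≤ SLE Θ (fun ω => clmp N (ξ j ω - μb)) := by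
        refine le_SLE (b := (N : ℝ)) (fun Q' hQ' => ?_) hP
        haveI := hprob Q' hQ'
        exact int_le_of_abs_le (hmclmp' N j).aestronglyMeasurable
          (fun ω => clmp_abs_le hRpos.le _)
      have h2 := (abs_le.mp (int_clmp_diff (hL2' P hP j) hRpos (hsqbd P hP j))).1
      have h3 : ∫ ω, (ξ j ω - μb) ∂P = 0 := by
        rw [integral_sub (hint1 P hP j) (integrable_const _), integral_const]
        simp [hEP j]
      linarith
    · apply SLE_le (by positivity)
      intro Q hQ
      haveI := hprob Q hQ
      have h2 := (abs_le.mp (int_clmp_diff (hL2' Q hQ j) hRpos (hsqbd Q hQ j))).2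
      have h3 : ∫ ω, (ξ j ω - μb) ∂Q = ∫ ω, ξ j ω ∂Q - μb := by
        rw [integral_sub (hint1 Q hQ j) (integrable_const _), integral_const]; simp
      have h4 := hA Q hQ j
      linarith
  -- Step C : nonnegative test functions of the past are "uncorrelated up" with innovations
  have hC : ∀ (k : ℕ) (g : (Fin (k+1) → ℝ) → ℝ), BddLip g → (∀ y, 0 ≤ g y) →
      ∫ ω, g (fun i : Fin (k+1) => ξ i ω) * (ξ (k+1) ω - μb) ∂P ≤ 0 := by
    intro k g hg hg0
    obtain ⟨⟨C, hCb⟩, ⟨K, hK⟩⟩ := hg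
    have hC0 : 0 ≤ C := le_trans (abs_nonneg _) (hCb (Classical.arbitrary _))
    have hgm : Measurable (fun ω => g (fun i : Fin (k+1) => ξ i ω)) :=
      hK.continuous.measurable.comp (measurable_pi_lambda _ fun i => hmeas i)
    have step : ∀ N : ℕ, 1 ≤ N →
        ∫ ω, g (fun i : Fin (k+1) => ξ i ω) * clmp N (ξ (k+1) ω - μb) ∂P ≤ C * (c₂ / N) := by
      intro N hN
      have hRpos : (0 : ℝ) < N := by exact_mod_cast hN
      have haNb := haN (k+1) N hN
      have hφ : BddLip (fun p : (Fin (k+1) → ℝ) × ℝ => g p.1 * clmp N (p.2 - μb)) :=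
        bddLip_mul ⟨⟨C, hCb⟩, ⟨K, hK⟩⟩ (bddLip_clmp_sub hRpos.le)
      have hindep := hiid.2 k _ hφ
      simp only [] at hindep
      have h1 : ∫ ω, g (fun i : Fin (k+1) => ξ i ω) * clmp N (ξ (k+1) ω - μb) ∂P ≤
          SLE Θ (fun ω => g (fun i : Fin (k+1) => ξ i ω) * clmp N (ξ (k+1) ω - μb)) := by
        refine le_SLE (b := C * N) (fun Q hQ => ?_) hP
        haveI := hprob Q hQ
        refine int_le_of_abs_le (hgm.mul (hmclmp' N (k+1))).aestronglyMeasurable fun ω => ?_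
        rw [abs_mul]
        exact mul_le_mul (hCb _) (clmp_abs_le hRpos.le _) (abs_nonneg _) hC0
      rw [hindep] at h1
      have h2 : (fun ω => SLE Θ (fun ω' =>
            g (fun i : Fin (k+1) => ξ i ω) * clmp N (ξ (k+1) ω' - μb))) =
          fun ω => g (fun i : Fin (k+1) => ξ i ω) *
            SLE Θ (fun ω' => clmp N (ξ (k+1) ω' - μb)) := by
        funext ω
        exact SLE_const_mul (hg0 _) _
      rw [h2] at h1
      refine le_trans h1 (SLE_le (by positivity) ?_)
      intro Q hQ
      haveI := hprob Q hQ
      rw [integral_mul_const]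
      calc (∫ ω, g (fun i : Fin (k+1) => ξ i ω) ∂Q) *
            SLE Θ (fun ω' => clmp N (ξ (k+1) ω' - μb)) ≤
          |(∫ ω, g (fun i : Fin (k+1) => ξ i ω) ∂Q)| *
            |SLE Θ (fun ω' => clmp N (ξ (k+1) ω' - μb))| := by
            rw [← abs_mul]; exact le_abs_self _
        _ ≤ C * (c₂ / N) :=
            mul_le_mul (abs_int_le hgm.aestronglyMeasurable (fun ω => hCb _)) haNb (abs_nonneg _) hC0
    have hTend : Filter.Tendsto
        (fun N : ℕ => ∫ ω, g (fun i : Fin (k+1) => ξ i ω) * clmp N (ξ (k+1) ω - μb) ∂P)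
        Filter.atTop
        (nhds (∫ ω, g (fun i : Fin (k+1) => ξ i ω) * (ξ (k+1) ω - μb) ∂P)) := by
      apply tendsto_integral_of_dominated_convergence
        (bound := fun ω => C * |ξ (k+1) ω - μb|)
      · exact fun N => (hgm.mul (hmclmp' N (k+1))).aestronglyMeasurable
      · exact (((hint1 P hP (k+1)).sub (integrable_const μb)).abs.const_mul C)
      · intro N
        refine Filter.Eventually.of_forall fun ω => ?_
        rw [Real.norm_eq_abs, abs_mul]
        exact mul_le_mul (hCb _) (clmp_abs_le' (Nat.cast_nonneg N) _) (abs_nonneg _) hC0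
      · refine Filter.Eventually.of_forall fun ω => ?_
        exact (tendsto_clmp _).const_mul _
    have hTend2 : Filter.Tendsto (fun N : ℕ => C * (c₂ / N)) Filter.atTop (nhds 0) := by
      simpa using (tendsto_const_div_atTop_nhds_zero_nat c₂).const_mul C
    exact le_of_tendsto_of_tendsto hTend hTend2 (Filter.eventually_atTop.mpr ⟨1, step⟩)
  -- Step D : general bounded Lipschitz functions of the past are uncorrelated with innovations
  have hD : ∀ (k : ℕ) (g : (Fin (k+1) → ℝ) → ℝ), BddLip g →
      ∫ ω, g (fun i : Fin (k+1) => ξ i ω) * (ξ (k+1) ω - μb) ∂P = 0 := by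
    intro k g hg
    obtain ⟨⟨C, hCb⟩, ⟨K, hK⟩⟩ := hg
    have hC0 : 0 ≤ C := le_trans (abs_nonneg _) (hCb (Classical.arbitrary _))
    have hgm : Measurable (fun ω => g (fun i : Fin (k+1) => ξ i ω)) :=
      hK.continuous.measurable.comp (measurable_pi_lambda _ fun i => hmeas i)
    have hη : Integrable (fun ω => ξ (k+1) ω - μb) P := (hint1 P hP _).sub (integrable_const _)
    have hgη : Integrable (fun ω => g (fun i : Fin (k+1) => ξ i ω) * (ξ (k+1) ω - μb)) P := by
      apply Integrable.mono' (hη.abs.const_mul C)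
        (hgm.mul ((hmeas (k+1)).sub measurable_const)).aestronglyMeasurable
      refine Filter.Eventually.of_forall fun ω => ?_
      rw [Real.norm_eq_abs, Pi.mul_apply, Pi.sub_apply, abs_mul]
      exact mul_le_mul_of_nonneg_right (hCb _) (abs_nonneg _)
    have hEη : ∫ ω, (ξ (k+1) ω - μb) ∂P = 0 := by
      rw [integral_sub (hint1 P hP _) (integrable_const _), integral_const]
      simp [hEP (k+1)]
    have h1 := hC k (fun y => C + g y) (bddLip_const_add ⟨⟨C, hCb⟩, ⟨K, hK⟩⟩ C)
      (fun y => by show 0 ≤ C + g y; linarith [(abs_le.mp (hCb y)).1])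
    have h2 := hC k (fun y => C - g y) (bddLip_const_sub ⟨⟨C, hCb⟩, ⟨K, hK⟩⟩ C)
      (fun y => by show 0 ≤ C - g y; linarith [(abs_le.mp (hCb y)).2])
    have e1 : (fun ω => (C + g (fun i : Fin (k+1) => ξ i ω)) * (ξ (k+1) ω - μb)) =
        fun ω => C * (ξ (k+1) ω - μb) +
          g (fun i : Fin (k+1) => ξ i ω) * (ξ (k+1) ω - μb) := by
      funext ω; ring
    have e2 : (fun ω => (C - g (fun i : Fin (k+1) => ξ i ω)) * (ξ (k+1) ω - μb)) =
        fun ω => C * (ξ (k+1) ω - μb) -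
          g (fun i : Fin (k+1) => ξ i ω) * (ξ (k+1) ω - μb) := by
      funext ω; ring
    rw [e1, integral_add (hη.const_mul C) hgη, integral_const_mul, hEη, mul_zero, zero_add] at h1
    rw [e2, integral_sub (hη.const_mul C) hgη, integral_const_mul, hEη, mul_zero, zero_sub,
      neg_nonpos] at h2
    linarith
  -- Step E : cross terms vanish
  have hE : ∀ i j : ℕ, i < j → ∫ ω, (ξ i ω - μb) * (ξ j ω - μb) ∂P = 0 := by
    intro i j hij
    obtain ⟨k, rfl⟩ : ∃ k, j = k + 1 := ⟨j - 1, by omega⟩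
    have hik : i < k + 1 := hij
    have hstep : ∀ N : ℕ, ∫ ω, clmp N (ξ i ω - μb) * (ξ (k+1) ω - μb) ∂P = 0 := by
      intro N
      have := hD k (fun y => clmp N (y ⟨i, hik⟩ - μb))
        (bddLip_clmp_eval (Nat.cast_nonneg N) ⟨i, hik⟩)
      simpa using this
    have hTend : Filter.Tendsto
        (fun N : ℕ => ∫ ω, clmp N (ξ i ω - μb) * (ξ (k+1) ω - μb) ∂P) Filter.atTop
        (nhds (∫ ω, (ξ i ω - μb) * (ξ (k+1) ω - μb) ∂P)) := by
      apply tendsto_integral_of_dominated_convergence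
        (bound := fun ω => |ξ i ω - μb| * |ξ (k+1) ω - μb|)
      · exact fun N => ((hmclmp' N i).mul ((hmeas (k+1)).sub measurable_const)).aestronglyMeasurable
      · have := (hintmul P hP i (k+1)).abs
        refine this.congr (Filter.Eventually.of_forall fun ω => ?_)
        simp [abs_mul]
      · intro N
        refine Filter.Eventually.of_forall fun ω => ?_
        rw [Real.norm_eq_abs, abs_mul]
        exact mul_le_mul_of_nonneg_right (clmp_abs_le' (Nat.cast_nonneg N) _) (abs_nonneg _)
      · refine Filter.Eventually.of_forall fun ω => ?_
        exact (tendsto_clmp _).mul_const _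
    rw [show (fun N : ℕ => ∫ ω, clmp N (ξ i ω - μb) * (ξ (k+1) ω - μb) ∂P) =
      (fun _ : ℕ => (0:ℝ)) from funext hstep] at hTend
    exact (tendsto_nhds_unique tendsto_const_nhds hTend).symm
  -- Step F : diagonal terms are bounded by B
  have hF : ∀ i : ℕ, ∫ ω, (ξ i ω - μb) ^ 2 ∂P ≤ B := by
    intro i
    have h1 : ∫ ω, (ξ i ω - μb) ^ 2 ∂P = ∫ ω, ξ i ω ^ 2 ∂P - μb ^ 2 := by
      have e : (fun ω => (ξ i ω - μb) ^ 2) =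
          fun ω => (ξ i ω ^ 2 - (2 * μb) * ξ i ω) + μb ^ 2 := by
        funext ω; ring
      have hint_lin : Integrable (fun ω => ξ i ω ^ 2 - 2 * μb * ξ i ω) P :=
        (hint2 P hP i).sub ((hint1 P hP i).const_mul (2 * μb))
      rw [e, integral_add hint_lin (integrable_const _),
        integral_sub (hint2 P hP i) ((hint1 P hP i).const_mul (2 * μb)), integral_const_mul,
        integral_const, hEP i]
      simp
      ring
    have h2 : ∫ ω, ξ i ω ^ 2 ∂P ≤ B := by
      have key : ∀ N : ℕ, ∫ ω, (clmp N (ξ i ω)) ^ 2 ∂P ≤ B := by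
        intro N
        have hN0 : (0:ℝ) ≤ N := Nat.cast_nonneg N
        calc ∫ ω, (clmp N (ξ i ω)) ^ 2 ∂P ≤ SLE Θ (fun ω => (clmp N (ξ i ω)) ^ 2) := by
              refine le_SLE (b := (N:ℝ) ^ 2) (fun Q hQ => ?_) hP
              haveI := hprob Q hQ
              refine int_le_of_abs_le ((hmclmp N i).pow_const 2).aestronglyMeasurable fun ω => ?_
              rw [abs_of_nonneg (sq_nonneg _)]
              nlinarith [abs_le.mp (clmp_abs_le hN0 (ξ i ω)), abs_nonneg (clmp (N:ℝ) (ξ i ω)),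
                sq_abs (clmp (N:ℝ) (ξ i ω))]
          _ = SLE Θ (fun ω => (clmp N (ξ 0 ω)) ^ 2) := hiid.1 i _ (bddLip_clmp_sq hN0)
          _ ≤ B := by
              apply SLE_le hB0
              intro Q hQ
              haveI := hprob Q hQ
              calc ∫ ω, (clmp N (ξ 0 ω)) ^ 2 ∂Q ≤ ∫ ω, ξ 0 ω ^ 2 ∂Q := by
                    apply integral_mono _ (hint2 Q hQ 0) (fun ω => clmp_sq_le hN0 _)
                    refine integrable_of_abs_le ((hmclmp N 0).pow_const 2).aestronglyMeasurable
                      (C := (N:ℝ)^2) fun ω => ?_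
                    rw [abs_of_nonneg (sq_nonneg _)]
                    nlinarith [abs_le.mp (clmp_abs_le hN0 (ξ 0 ω)), abs_nonneg (clmp (N:ℝ) (ξ 0 ω)),
                      sq_abs (clmp (N:ℝ) (ξ 0 ω))]
                _ ≤ B := le_SLE (fun Q' hQ' => hM Q' hQ' 0) hQ
      have hTend : Filter.Tendsto (fun N : ℕ => ∫ ω, (clmp N (ξ i ω)) ^ 2 ∂P) Filter.atTop
          (nhds (∫ ω, ξ i ω ^ 2 ∂P)) := by
        apply tendsto_integral_of_dominated_convergence (bound := fun ω => ξ i ω ^ 2)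
        · exact fun N => ((hmclmp N i).pow_const 2).aestronglyMeasurable
        · exact hint2 P hP i
        · intro N
          refine Filter.Eventually.of_forall fun ω => ?_
          rw [Real.norm_eq_abs, abs_of_nonneg (sq_nonneg _)]
          exact clmp_sq_le (Nat.cast_nonneg N) _
        · refine Filter.Eventually.of_forall fun ω => ?_
          exact (tendsto_clmp _).pow 2
      exact le_of_tendsto hTend (Filter.Eventually.of_forall key)
    nlinarith [sq_nonneg μb]
  -- Part 1
  have part1 : ∀ n : ℕ, 1 ≤ n →
      ∫ ω, ((∑ i ∈ Finset.range n, ξ i ω) / n - μb) ^ 2 ∂P ≤ B / n := by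
    intro n hn
    have hn0 : (0:ℝ) < n := by exact_mod_cast hn
    have hfun : (fun ω => ((∑ i ∈ Finset.range n, ξ i ω) / n - μb) ^ 2) =
        fun ω => (∑ i ∈ Finset.range n, (ξ i ω - μb)) ^ 2 / (n:ℝ) ^ 2 := by
      funext ω
      rw [Finset.sum_sub_distrib, Finset.sum_const, Finset.card_range, nsmul_eq_mul, ← div_pow]
      congr 1
      field_simp
    rw [hfun, integral_div]
    have hsum : ∫ ω, (∑ i ∈ Finset.range n, (ξ i ω - μb)) ^ 2 ∂P ≤ n * B := by
      have hexp : (fun ω => (∑ i ∈ Finset.range n, (ξ i ω - μb)) ^ 2) =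
          fun ω => ∑ i ∈ Finset.range n, ∑ j ∈ Finset.range n,
            (ξ i ω - μb) * (ξ j ω - μb) := by
        funext ω; rw [sq, Finset.sum_mul_sum]
      rw [hexp, integral_finset_sum _
        (fun i _ => integrable_finset_sum _ (fun j _ => hintmul P hP i j))]
      calc ∑ i ∈ Finset.range n, ∫ ω, (∑ j ∈ Finset.range n, (ξ i ω - μb) * (ξ j ω - μb)) ∂P
          = ∑ i ∈ Finset.range n, ∑ j ∈ Finset.range n, ∫ ω, (ξ i ω - μb) * (ξ j ω - μb) ∂P :=
            Finset.sum_congr rfl fun i _ =>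
              integral_finset_sum _ (fun j _ => hintmul P hP i j)
        _ ≤ ∑ _i ∈ Finset.range n, B := by
            apply Finset.sum_le_sum
            intro i hi
            have hz : ∀ j ∈ Finset.range n, j ≠ i →
                ∫ ω, (ξ i ω - μb) * (ξ j ω - μb) ∂P = 0 := by
              intro j _ hne'
              rcases lt_or_gt_of_ne hne' with h | h
              · rw [show (fun ω => (ξ i ω - μb) * (ξ j ω - μb)) =
                  fun ω => (ξ j ω - μb) * (ξ i ω - μb) from funext fun ω => mul_comm _ _]
                exact hE j i h
              · exact hE i j h
            rw [Finset.sum_eq_single_of_mem i hi hz]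
            rw [show (fun ω => (ξ i ω - μb) * (ξ i ω - μb)) =
              fun ω => (ξ i ω - μb) ^ 2 from funext fun ω => (sq _).symm]
            exact hF i
        _ = n * B := by rw [Finset.sum_const, Finset.card_range, nsmul_eq_mul]
    calc (∫ ω, (∑ i ∈ Finset.range n, (ξ i ω - μb)) ^ 2 ∂P) / (n:ℝ)^2 ≤ (n * B) / (n:ℝ)^2 := by
          gcongr
      _ = B / n := by field_simp
  refine ⟨part1, ?_⟩
  intro ε hε α hα
  have hα0 : (0:ℝ) < α := by linarith
  have hm1 : ∀ n : ℕ, 1 ≤ Nat.floor (α ^ (n+1)) := by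
    intro n
    apply Nat.le_floor
    push_cast
    exact one_le_pow₀ hα.le
  have hcheb : ∀ n : ℕ,
      (P {ω | ε < |(∑ i ∈ Finset.range (Nat.floor (α ^ (n + 1))), ξ i ω) /
        (Nat.floor (α ^ (n + 1)) : ℝ) - μb|}).toReal ≤
      B / ε ^ 2 * (1 / (Nat.floor (α ^ (n + 1)) : ℝ)) := by
    intro n
    set m := Nat.floor (α ^ (n+1)) with hmdef
    have hm0R : (0:ℝ) < (m : ℝ) := by exact_mod_cast hm1 n
    set X : Ω → ℝ := fun ω => (∑ i ∈ Finset.range m, ξ i ω) / (m : ℝ) - μb with hXdef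
    have hXm : MemLp X 2 P := by
      have h1 : MemLp (fun ω => ∑ i ∈ Finset.range m, ξ i ω) 2 P :=
        memLp_finset_sum _ (fun i _ => hL2 P hP i)
      have h2 := (h1.const_mul ((m:ℝ)⁻¹)).sub (memLp_const μb)
      have e : X = (fun ω => (m:ℝ)⁻¹ * ∑ i ∈ Finset.range m, ξ i ω) - fun _ => μb := by
        funext ω
        simp [hXdef, Pi.sub_apply, div_eq_inv_mul]
      rw [e]; exact h2
    have hXsq : Integrable (fun ω => X ω ^ 2) P := hXm.integrable_sq
    have hmark := mul_meas_ge_le_integral_of_nonneg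
      (Filter.Eventually.of_forall fun ω => sq_nonneg (X ω)) hXsq (ε ^ 2)
    have hsub : {ω | ε < |X ω|} ⊆ {ω | ε ^ 2 ≤ X ω ^ 2} := by
      intro ω hω
      simp only [Set.mem_setOf_eq] at *
      nlinarith [abs_nonneg (X ω), sq_abs (X ω)]
    have hmono : (P {ω | ε < |X ω|}).toReal ≤ (P {ω | ε ^ 2 ≤ X ω ^ 2}).toReal :=
      ENNReal.toReal_mono (measure_ne_top P _) (measure_mono hsub)
    have hp1 : ∫ ω, X ω ^ 2 ∂P ≤ B / (m : ℝ) := part1 m (hm1 n)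
    have h3 : ε ^ 2 * (P {ω | ε < |X ω|}).toReal ≤ B / (m : ℝ) :=
      le_trans (mul_le_mul_of_nonneg_left hmono (by positivity)) (le_trans hmark hp1)
    have hε2 : (0:ℝ) < ε ^ 2 := by positivity
    calc (P {ω | ε < |X ω|}).toReal ≤ (B / (m:ℝ)) / ε ^ 2 := by
          rw [le_div_iff₀ hε2]
          linarith [h3]
      _ = B / ε ^ 2 * (1 / (m:ℝ)) := by ring
  have hsummul : Summable (fun n : ℕ => (1:ℝ) / (Nat.floor (α ^ (n+1)) : ℝ)) := by
    have hb : ∀ n : ℕ, (1:ℝ) / (Nat.floor (α ^ (n+1)) : ℝ) ≤ (2/α) * (α⁻¹) ^ n := by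
      intro n
      have hpow : (0:ℝ) < α ^ (n+1) := by positivity
      have h1 : α ^ (n+1) / 2 ≤ (Nat.floor (α ^ (n+1)) : ℝ) := by
        rcases le_total (α ^ (n+1)) 2 with h | h
        · calc α ^ (n+1) / 2 ≤ 1 := by linarith
            _ ≤ _ := by exact_mod_cast hm1 n
        · have h2 := Nat.sub_one_lt_floor (α ^ (n+1))
          linarith
      have hαn : (0:ℝ) < α ^ n := by positivity
      calc (1:ℝ) / (Nat.floor (α ^ (n+1)) : ℝ) ≤ 1 / (α ^ (n+1) / 2) :=
            one_div_le_one_div_of_le (by positivity) h1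
        _ = (2/α) * (α⁻¹) ^ n := by
            rw [pow_succ, inv_pow]
            field_simp
    apply Summable.of_nonneg_of_le (fun n => by positivity) hb
    exact ((summable_geometric_of_lt_one (by positivity) (inv_lt_one_of_one_lt₀ hα)).mul_left (2/α))
  have hterm0 : ∀ n : ℕ,
      (0:ℝ) ≤ (P {ω | ε < |(∑ i ∈ Finset.range (Nat.floor (α ^ (n + 1))), ξ i ω) /
        (Nat.floor (α ^ (n + 1)) : ℝ) - μb|}).toReal := fun n => ENNReal.toReal_nonneg
  refine ⟨Summable.of_nonneg_of_le hterm0 hcheb (hsummul.mul_left (B / ε ^ 2)), ?_⟩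
  calc ∑' n : ℕ, (P {ω | ε < |(∑ i ∈ Finset.range (Nat.floor (α ^ (n + 1))), ξ i ω) /
        (Nat.floor (α ^ (n + 1)) : ℝ) - μb|}).toReal
      ≤ ∑' n : ℕ, B / ε ^ 2 * (1 / (Nat.floor (α ^ (n + 1)) : ℝ)) :=
        Summable.tsum_le_tsum hcheb
          (Summable.of_nonneg_of_le hterm0 hcheb (hsummul.mul_left (B / ε ^ 2)))
          (hsummul.mul_left (B / ε ^ 2))
    _ = B / ε ^ 2 * ∑' n : ℕ, (1:ℝ) / (Nat.floor (α ^ (n + 1)) : ℝ) := tsum_mul_left
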